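/- Let (V, ω) be a finite-dimensional real symplectic vector space, L ⊆ V ⊗ ℂ a positive complex Lagrangian, and C ⊆ V coisotropic with reduction π₀ : C → V₀ = C/C^ω. Then the reduced Lagrangian L₀ = π₀(L ∩ C_ℂ) is a positive Lagrangian in V₀ ⊗ ℂ with respect to the reduced symplectic form. -/

import Mathlib

open scoped TensorProduct

/-- The symplectic complement of a subspace with respect to a bilinear form. -/
def SympComp {R M : Type*} [CommRing R] [AddCommGroup M] [Module R M]
    (B : M →ₗ[R] M →ₗ[R] R) (C : Submodule R M) : Submodule R M where
  carrier := {v | ∀ c ∈ C, B v c = 0}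
  add_mem' := by
    intro a b ha hb c hc
    simp [map_add, LinearMap.add_apply, ha c hc, hb c hc]
  zero_mem' := by
    intro c hc
    simp
  smul_mem' := by
    intro r a ha c hc
    simp [map_smul, LinearMap.smul_apply, ha c hc]

/-- A subspace is Lagrangian if it coincides with its symplectic complement. -/
def IsLagrangian {R M : Type*} [CommRing R] [AddCommGroup M] [Module R M]
    (B : M →ₗ[R] M →ₗ[R] R) (L : Submodule R M) : Prop :=
  SympComp B L = L

/-- Complex conjugation on the complexification `ℂ ⊗[ℝ] V` of a real vector space. -/
noncomputable def conjTensor (V : Type*) [AddCommGroup V] [Module ℝ V] :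
    (ℂ ⊗[ℝ] V) →ₗ[ℝ] (ℂ ⊗[ℝ] V) :=
  TensorProduct.map Complex.conjAe.toLinearMap LinearMap.id

/-! The reduced form pulls back to `ω` along `C_ℂ`, and complex conjugation commutes with the
reduction map, so `L₀` is isotropic and inherits positivity from `L ∩ C_ℂ` (on which the map from
`C_ℂ` to `V ⊗ ℂ` is injective). For maximality, if `π₀ a` is orthogonal to `L₀` then `a` is
orthogonal to `L ∩ C_ℂ`, whose complement is `L + (C_ℂ)^ω = L + (C^ω)_ℂ`; removing the
`(C^ω)_ℂ`-component, which `π₀` kills, moves `a` into `L` without changing `π₀ a`. -/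

open Complex TensorProduct

section SympComp

variable {R M : Type*} [CommRing R] [AddCommGroup M] [Module R M]

lemma mem_sympComp {B : M →ₗ[R] M →ₗ[R] R} {N : Submodule R M} {v : M} :
    v ∈ SympComp B N ↔ ∀ c ∈ N, B v c = 0 := Iff.rfl

lemma sympComp_sup (B : M →ₗ[R] M →ₗ[R] R) (N₁ N₂ : Submodule R M) :
    SympComp B (N₁ ⊔ N₂) = SympComp B N₁ ⊓ SympComp B N₂ := by
  ext v
  simp only [Submodule.mem_inf, mem_sympComp]
  refine ⟨fun h ↦ ⟨fun c hc ↦ h c (Submodule.mem_sup_left hc),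
    fun c hc ↦ h c (Submodule.mem_sup_right hc)⟩, ?_⟩
  rintro ⟨h₁, h₂⟩ c hc
  obtain ⟨a, ha, b, hb, rfl⟩ := Submodule.mem_sup.mp hc
  rw [map_add, h₁ a ha, h₂ b hb, add_zero]

end SympComp

section Field

variable {K W : Type*} [Field K] [AddCommGroup W] [Module K W] {B : LinearMap.BilinForm K W}

lemma sympComp_eq_orthogonal (hB : B.IsRefl) (N : Submodule K W) :
    SympComp B N = B.orthogonal N := by
  ext v
  exact ⟨fun h n hn ↦ hB _ _ (h n hn), fun h n hn ↦ hB _ _ (h n hn)⟩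

variable [FiniteDimensional K W]

lemma sympComp_sympComp (hnd : B.Nondegenerate) (hB : B.IsRefl) (N : Submodule K W) :
    SympComp B (SympComp B N) = N := by
  rw [sympComp_eq_orthogonal hB, sympComp_eq_orthogonal hB,
    LinearMap.BilinForm.orthogonal_orthogonal hnd hB]

lemma sympComp_inf (hnd : B.Nondegenerate) (hB : B.IsRefl) (N₁ N₂ : Submodule K W) :
    SympComp B (N₁ ⊓ N₂) = SympComp B N₁ ⊔ SympComp B N₂ := by
  conv_lhs => rw [← sympComp_sympComp hnd hB N₁, ← sympComp_sympComp hnd hB N₂,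
    ← sympComp_sup]
  exact sympComp_sympComp hnd hB _

/-- `ι` and `π` play the roles of `D ↪ W` and `D ↠ D / D^Ω` for a coisotropic `D = range ι`. -/
lemma IsLagrangian.map_comap {E W₀ : Type*} [AddCommGroup E] [Module K E]
    [AddCommGroup W₀] [Module K W₀] (hnd : B.Nondegenerate) (hB : B.IsRefl)
    {L : Submodule K W} (hL : IsLagrangian B L) {B₀ : LinearMap.BilinForm K W₀}
    {ι : E →ₗ[K] W} {π : E →ₗ[K] W₀} (hπ : Function.Surjective π)
    (hcompat : B₀.comp π π = B.comp ι ι)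
    (hker : SympComp B (LinearMap.range ι) ≤ (LinearMap.ker π).map ι) :
    IsLagrangian B₀ ((L.comap ι).map π) := by
  have hB₀ (a b : E) : B₀ (π a) (π b) = B (ι a) (ι b) := LinearMap.congr_fun₂ hcompat a b
  apply le_antisymm
  · intro α hα
    obtain ⟨a, rfl⟩ := hπ α
    have ha : ι a ∈ SympComp B (L ⊓ LinearMap.range ι) := by
      rintro _ ⟨hl, u, rfl⟩
      rw [← hB₀]
      exact hα (π u) ⟨u, hl, rfl⟩
    rw [sympComp_inf hnd hB, hL] at ha
    obtain ⟨l, hl, _, hk, hlk⟩ := Submodule.mem_sup.mp ha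
    obtain ⟨k, hk₀, rfl⟩ := hker hk
    refine ⟨a - k, ?_, by rw [map_sub, LinearMap.mem_ker.mp hk₀, sub_zero]⟩
    show ι (a - k) ∈ L
    rwa [map_sub, ← hlk, add_sub_cancel_right]
  · rintro _ ⟨u, hu, rfl⟩ _ ⟨u', hu', rfl⟩
    rw [hB₀]
    exact (hL.symm ▸ hu : ι u ∈ SympComp B L) _ hu'

end Field

section BaseChange

variable {R A M N : Type*} [CommRing R] [CommRing A] [Algebra R A]
  [AddCommGroup M] [Module R M] [AddCommGroup N] [Module R N]

lemma LinearMap.BilinForm.baseChange_comp (B : LinearMap.BilinForm R N) (f g : M →ₗ[R] N) :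
    (B.comp f g).baseChange A = (B.baseChange A).comp (f.baseChange A) (g.baseChange A) := by
  ext
  simp

lemma LinearMap.BilinForm.IsAlt.isRefl_baseChange {B : LinearMap.BilinForm R M} (hB : B.IsAlt) :
    (B.baseChange A).IsRefl := by
  have hskew : (B.baseChange A).flip = -B.baseChange A := by
    ext x y
    simp [← LinearMap.IsAlt.neg hB x y]
  intro x y h
  simpa [h] using LinearMap.congr_fun₂ hskew x y

lemma Submodule.baseChange_le_map_ker {P C : Submodule R M} (hPC : P ≤ C) :
    P.baseChange A ≤
      ((P.comap C.subtype).mkQ.baseChange A).ker.map (C.subtype.baseChange A) := by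
  rw [Submodule.baseChange_eq_span, Submodule.span_le]
  rintro _ ⟨x, hx, rfl⟩
  refine ⟨1 ⊗ₜ ⟨x, hPC hx⟩, ?_, rfl⟩
  rw [SetLike.mem_coe, LinearMap.mem_ker, LinearMap.baseChange_tmul, Submodule.mkQ_apply,
    (Submodule.Quotient.mk_eq_zero (P.comap C.subtype) (x := ⟨x, hPC hx⟩)).mpr hx, tmul_zero]

lemma LinearMap.baseChange_injective [Module.Flat R A] {f : M →ₗ[R] N}
    (hf : Function.Injective f) : Function.Injective (f.baseChange A) := by
  rw [LinearMap.baseChange_eq_ltensor]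
  exact Module.Flat.lTensor_preserves_injective_linearMap f hf

end BaseChange

section Complexification

variable {V : Type*} [AddCommGroup V] [Module ℝ V]

lemma exists_eq_one_tmul_add_I_tmul (u : ℂ ⊗[ℝ] V) : ∃ x y : V, u = 1 ⊗ₜ x + I ⊗ₜ y := by
  induction u using TensorProduct.induction_on with
  | zero => exact ⟨0, 0, by simp⟩
  | tmul z m =>
    refine ⟨z.re • m, z.im • m, ?_⟩
    rw [tmul_smul, tmul_smul, smul_tmul', smul_tmul', ← add_tmul]
    congr 1
    simp [Complex.real_smul]
  | add a b ha hb =>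
    obtain ⟨x₁, y₁, rfl⟩ := ha
    obtain ⟨x₂, y₂, rfl⟩ := hb
    exact ⟨x₁ + x₂, y₁ + y₂, by rw [tmul_add, tmul_add]; abel⟩

lemma LinearMap.BilinForm.baseChange_one_tmul_add_I_tmul (ω : LinearMap.BilinForm ℝ V)
    (x y c : V) : ω.baseChange ℂ (1 ⊗ₜ x + I ⊗ₜ y) (1 ⊗ₜ c) = ⟨ω x c, ω y c⟩ := by
  apply Complex.ext <;> simp

lemma sympComp_baseChange_le (ω : LinearMap.BilinForm ℝ V) (N : Submodule ℝ V) :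
    SympComp (ω.baseChange ℂ) (N.baseChange ℂ) ≤ (SympComp ω N).baseChange ℂ := by
  intro u hu
  obtain ⟨x, y, rfl⟩ := exists_eq_one_tmul_add_I_tmul u
  have hxy (c : V) (hc : c ∈ N) : ω x c = 0 ∧ ω y c = 0 := by
    simpa [Complex.ext_iff, ω.baseChange_one_tmul_add_I_tmul] using
      hu _ (Submodule.tmul_mem_baseChange_of_mem 1 hc)
  exact add_mem (Submodule.tmul_mem_baseChange_of_mem _ fun c hc ↦ (hxy c hc).1)
    (Submodule.tmul_mem_baseChange_of_mem _ fun c hc ↦ (hxy c hc).2)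

lemma LinearMap.BilinForm.Nondegenerate.baseChange_complex {ω : LinearMap.BilinForm ℝ V}
    (hnd : ω.Nondegenerate) (hrefl : (ω.baseChange ℂ).IsRefl) :
    (ω.baseChange ℂ).Nondegenerate := by
  refine hrefl.nondegenerate_iff_separatingLeft.mpr fun u hu ↦ ?_
  have hω : SympComp ω ⊤ = ⊥ := eq_bot_iff.mpr fun x hx ↦ hnd.1 x fun c ↦ hx c trivial
  have := sympComp_baseChange_le ω ⊤ (fun c _ ↦ hu c)
  rwa [hω, Submodule.baseChange_bot, Submodule.mem_bot] at this

lemma conjTensor_baseChange {W : Type*} [AddCommGroup W] [Module ℝ W]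
    (f : W →ₗ[ℝ] V) (u : ℂ ⊗[ℝ] W) :
    conjTensor V (f.baseChange ℂ u) = f.baseChange ℂ (conjTensor W u) := by
  induction u using TensorProduct.induction_on with
  | zero => simp
  | tmul z m => simp [conjTensor]
  | add a b ha hb => simp only [map_add, ha, hb]

end Complexification

lemma positive_map_comap {V W V₀ : Type*} [AddCommGroup V] [Module ℝ V] [AddCommGroup W]
    [Module ℝ W] [AddCommGroup V₀] [Module ℝ V₀] {ω : LinearMap.BilinForm ℝ V}
    {ω₀ : LinearMap.BilinForm ℝ V₀} {ι : W →ₗ[ℝ] V} {π : W →ₗ[ℝ] V₀}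
    (hι : Function.Injective ι) (hcompat : ω₀.comp π π = ω.comp ι ι)
    {L : Submodule ℂ (ℂ ⊗[ℝ] V)}
    (hpos : ∀ v ∈ L, v ≠ 0 →
      0 < (I * ω.baseChange ℂ v (conjTensor V v)).re ∧
        (I * ω.baseChange ℂ v (conjTensor V v)).im = 0) :
    ∀ v ∈ (L.comap (ι.baseChange ℂ)).map (π.baseChange ℂ), v ≠ 0 →
      0 < (I * ω₀.baseChange ℂ v (conjTensor V₀ v)).re ∧
        (I * ω₀.baseChange ℂ v (conjTensor V₀ v)).im = 0 := by
  rintro _ ⟨u, hu, rfl⟩ hne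
  have hform : ω₀.baseChange ℂ (π.baseChange ℂ u) (conjTensor V₀ (π.baseChange ℂ u)) =
      ω.baseChange ℂ (ι.baseChange ℂ u) (conjTensor V (ι.baseChange ℂ u)) := by
    simpa only [LinearMap.BilinForm.baseChange_comp, LinearMap.BilinForm.comp_apply,
      conjTensor_baseChange] using
      LinearMap.congr_fun₂ (congrArg (LinearMap.BilinForm.baseChange ℂ) hcompat) u
        (conjTensor W u)
  have hιu : ι.baseChange ℂ u ≠ 0 := by
    rintro h
    rw [(LinearMap.baseChange_injective hι).eq_iff' (map_zero _)] at h
    exact hne (by rw [h, map_zero])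
  rw [hform]
  exact hpos _ hu hιu

/-- **Reduction of positive Lagrangians.**  Let `(V, ω)` be a finite-dimensional real
symplectic vector space, `L ⊆ V ⊗ ℂ` a positive complex Lagrangian and `C ⊆ V` coisotropic
with reduction `π₀ : C → V₀ = C/C^ω`.  Then the reduced Lagrangian `L₀ = π₀(L ∩ C_ℂ)` is a
positive Lagrangian in `V₀ ⊗ ℂ` with respect to the reduced symplectic form. -/
theorem positive_lagrangian_reduction
    {V : Type*} [AddCommGroup V] [Module ℝ V] [FiniteDimensional ℝ V]
    (ω : LinearMap.BilinForm ℝ V) (halt : ∀ v, ω v v = 0)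
    (hnd : LinearMap.BilinForm.Nondegenerate ω)
    (C : Submodule ℝ V) (hcoiso : SympComp ω C ≤ C)
    (L : Submodule ℂ (ℂ ⊗[ℝ] V))
    (hL : IsLagrangian (LinearMap.BilinForm.baseChange ℂ ω) L)
    (hpos : ∀ v ∈ L, v ≠ 0 →
      0 < (Complex.I * LinearMap.BilinForm.baseChange ℂ ω v (conjTensor V v)).re ∧
        (Complex.I * LinearMap.BilinForm.baseChange ℂ ω v (conjTensor V v)).im = 0)
    (ω₀ : LinearMap.BilinForm ℝ (C ⧸ Submodule.comap C.subtype (SympComp ω C)))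
    (hω₀ : ∀ c c' : C,
      ω₀ ((Submodule.comap C.subtype (SympComp ω C)).mkQ c)
          ((Submodule.comap C.subtype (SympComp ω C)).mkQ c') = ω (c : V) (c' : V)) :
    IsLagrangian (LinearMap.BilinForm.baseChange ℂ ω₀)
        (Submodule.map
          (LinearMap.baseChange ℂ (Submodule.comap C.subtype (SympComp ω C)).mkQ)
          (Submodule.comap (LinearMap.baseChange ℂ C.subtype) L)) ∧
      ∀ v ∈ Submodule.map
          (LinearMap.baseChange ℂ (Submodule.comap C.subtype (SympComp ω C)).mkQ)
          (Submodule.comap (LinearMap.baseChange ℂ C.subtype) L), v ≠ 0 →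
        0 < (Complex.I * LinearMap.BilinForm.baseChange ℂ ω₀ v
              (conjTensor (C ⧸ Submodule.comap C.subtype (SympComp ω C)) v)).re ∧
          (Complex.I * LinearMap.BilinForm.baseChange ℂ ω₀ v
              (conjTensor (C ⧸ Submodule.comap C.subtype (SympComp ω C)) v)).im = 0 := by
  have hcompat : ω₀.comp (Submodule.comap C.subtype (SympComp ω C)).mkQ
      (Submodule.comap C.subtype (SympComp ω C)).mkQ = ω.comp C.subtype C.subtype :=
    LinearMap.ext₂ hω₀
  have hrefl : (ω.baseChange ℂ).IsRefl := LinearMap.BilinForm.IsAlt.isRefl_baseChange halt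
  refine ⟨IsLagrangian.map_comap (hnd.baseChange_complex hrefl) hrefl hL
    (LinearMap.baseChange_surjective ℂ (Submodule.mkQ_surjective _))
    (by simpa only [LinearMap.BilinForm.baseChange_comp] using
      congrArg (LinearMap.BilinForm.baseChange ℂ) hcompat)
    ((sympComp_baseChange_le ω C).trans (Submodule.baseChange_le_map_ker hcoiso)),
    positive_map_comap C.injective_subtype hcompat hpos⟩
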